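/- arXiv:1612.00029 — 3 statements merged into one kernel-verified Lean document; each statement's English description precedes it below -/
import Mathlib

section
/- For any density matrices ρ and σ on a finite-dimensional Hilbert space and any unitary U, the quantum relative entropy satisfies D(UρU†‖σ) ≥ D^↓(ρ‖σ), where D^↓(ρ‖σ) := Σ_m ρ_m log(ρ_m/σ_m) with {ρ_m} and {σ_m} the eigenvalues of ρ and σ, both arranged in non-increasing order. -/
open Matrix
open scoped ComplexOrder

noncomputable section

/-- Functional calculus for a (Hermitian) matrix: apply `f` to the eigenvalues. -/
def matFun {n : ℕ} (f : ℝ → ℝ) (A : Matrix (Fin n) (Fin n) ℂ) : Matrix (Fin n) (Fin n) ℂ :=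
  if hA : A.IsHermitian then
    (hA.eigenvectorUnitary : Matrix (Fin n) (Fin n) ℂ) *
      Matrix.diagonal (fun i => (f (hA.eigenvalues i) : ℂ)) *
      star (hA.eigenvectorUnitary : Matrix (Fin n) (Fin n) ℂ)
  else 0

/-- Matrix logarithm of a Hermitian matrix (spectral calculus with `Real.log`). -/
def matLog {n : ℕ} (A : Matrix (Fin n) (Fin n) ℂ) : Matrix (Fin n) (Fin n) ℂ :=
  matFun Real.log A

/-- Von Neumann entropy `S(ρ) = -Tr(ρ log ρ)`. -/
def vnEntropy {n : ℕ} (ρ : Matrix (Fin n) (Fin n) ℂ) : ℝ :=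
  -(Matrix.trace (ρ * matLog ρ)).re

/-- Quantum relative entropy `D(ρ‖σ) = Tr(ρ log ρ) - Tr(ρ log σ)`. -/
def relEnt {n : ℕ} (ρ σ : Matrix (Fin n) (Fin n) ℂ) : ℝ :=
  (Matrix.trace (ρ * (matLog ρ - matLog σ))).re

/-- Gibbs state `ω_β(H) = e^{-βH}/Tr(e^{-βH})`. -/
def gibbs {n : ℕ} (β : ℝ) (H : Matrix (Fin n) (Fin n) ℂ) : Matrix (Fin n) (Fin n) ℂ :=
  (Matrix.trace (NormedSpace.exp ((-β : ℂ) • H)))⁻¹ • NormedSpace.exp ((-β : ℂ) • H)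

/-- A density matrix: positive semidefinite with unit trace. -/
def IsDensity {n : ℕ} (ρ : Matrix (Fin n) (Fin n) ℂ) : Prop :=
  ρ.PosSemidef ∧ Matrix.trace ρ = 1

/-- Rearrangement of a finite real tuple in non-increasing order. -/
def sortDesc {n : ℕ} (f : Fin n → ℝ) : Fin n → ℝ :=
  fun i => -(((fun j => -f j) ∘ Tuple.sort (fun j => -f j)) i)

/-- `D^↓(ρ‖σ) = Σ_m ρ_m log(ρ_m/σ_m)` with the eigenvalues of both states sorted in
non-increasing order. -/
def Ddown {n : ℕ} (ρeig σeig : Fin n → ℝ) : ℝ :=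
  ∑ i, sortDesc ρeig i * Real.log (sortDesc ρeig i / sortDesc σeig i)

/-! Diagonalise `ρ' = UρU†` and `σ`, with eigenvalues `p` and `q` and eigenvector unitaries `W`
and `W'`. Conjugation by `U` does not change the spectrum, so `Tr ρ' log ρ' = ∑ pᵢ log pᵢ`, while
`Tr ρ' log σ = ∑ᵢⱼ pᵢ log qⱼ |Vᵢⱼ|²` with `V = W†W'` unitary. The matrix `(|Vᵢⱼ|²)` is doubly
stochastic, hence by Birkhoff's theorem a convex combination of permutation matrices, and for each
permutation `π` the rearrangement inequality gives `∑ pᵢ log q_{π i} ≤ ∑ p↓ᵢ log q↓ᵢ`. -/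

open Finset

section SortDesc

variable {n : ℕ}

lemma sortDesc_eq_comp (f : Fin n → ℝ) : sortDesc f = f ∘ Tuple.sort (fun j => -f j) := by
  funext i; simp [sortDesc]

lemma antitone_sortDesc (f : Fin n → ℝ) : Antitone (sortDesc f) := fun i j hij => by
  have := Tuple.monotone_sort (fun j => -f j) hij
  simp only [sortDesc, Function.comp_apply] at this ⊢
  linarith

lemma sum_comp_sortDesc (g : ℝ → ℝ) (f : Fin n → ℝ) :
    ∑ i, g (sortDesc f i) = ∑ i, g (f i) := by
  rw [sortDesc_eq_comp]
  exact Equiv.sum_comp _ (g ∘ f)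

lemma sortDesc_eq_of_antitone {f : Fin n → ℝ} {π : Equiv.Perm (Fin n)}
    (hf : Antitone (f ∘ π)) : sortDesc f = f ∘ π := by
  have := Tuple.unique_monotone (Tuple.monotone_sort fun j => -f j) hf.neg
  funext i
  simpa [sortDesc] using congrFun this i

lemma sortDesc_comp_of_monotoneOn {g : ℝ → ℝ} {f : Fin n → ℝ}
    (hg : MonotoneOn g (Set.range f)) : sortDesc (g ∘ f) = g ∘ sortDesc f := by
  rw [sortDesc_eq_comp f]
  refine sortDesc_eq_of_antitone fun i j hij => hg ⟨_, rfl⟩ ⟨_, rfl⟩ ?_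
  simpa [sortDesc_eq_comp] using antitone_sortDesc f hij

lemma sum_mul_comp_perm_le_sum_sortDesc_mul (a b : Fin n → ℝ) (π : Equiv.Perm (Fin n)) :
    ∑ i, a i * b (π i) ≤ ∑ i, sortDesc a i * sortDesc b i := by
  set α := Tuple.sort fun j => -a j
  set β := Tuple.sort fun j => -b j
  have hb (j : Fin n) : b j = sortDesc b (β.symm j) := by simp [sortDesc_eq_comp, β]
  calc ∑ i, a i * b (π i) = ∑ k, sortDesc a k * sortDesc b ((α.trans (π.trans β.symm)) k) := by
        rw [← Equiv.sum_comp α]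
        simp [sortDesc_eq_comp, α, ← hb]
    _ ≤ ∑ i, sortDesc a i * sortDesc b i :=
        ((antitone_sortDesc a).monovary (antitone_sortDesc b)).sum_mul_comp_perm_le_sum_mul

end SortDesc

namespace Matrix

variable {ι : Type*} [Fintype ι] [DecidableEq ι]

lemma sum_mul_mul_le_of_mem_doublyStochastic {a b : ι → ℝ} {c : ℝ}
    (hperm : ∀ π : Equiv.Perm ι, ∑ i, a i * b (π i) ≤ c)
    {D : Matrix ι ι ℝ} (hD : D ∈ doublyStochastic ℝ ι) :
    ∑ i, ∑ j, a i * b j * D i j ≤ c := by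
  have hlin : IsLinearMap ℝ fun M : Matrix ι ι ℝ => ∑ i, ∑ j, a i * b j * M i j :=
    ⟨fun M N => by simp [mul_add, sum_add_distrib],
      fun r M => by simp [mul_sum, mul_left_comm r]⟩
  rw [← SetLike.mem_coe, doublyStochastic_eq_convexHull_permMatrix] at hD
  refine convexHull_min ?_ (convex_halfSpace_le hlin c) hD
  rintro _ ⟨π, rfl⟩
  simpa [Equiv.Perm.permMatrix, PEquiv.toMatrix_apply, eq_comm] using hperm π

lemma normSq_unitary_mem_doublyStochastic (U : unitaryGroup ι ℂ) :
    of (fun i j => Complex.normSq (U i j)) ∈ doublyStochastic ℝ ι := by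
  rw [mem_doublyStochastic_iff_sum]
  refine ⟨fun i j => Complex.normSq_nonneg _, fun i => ?_, fun j => ?_⟩
  · have := congrFun₂ (mem_unitaryGroup_iff.mp U.2) i i
    simp only [mul_apply, star_apply, Complex.star_def, Complex.mul_conj, one_apply_eq] at this
    exact_mod_cast this
  · have := congrFun₂ (mem_unitaryGroup_iff'.mp U.2) j j
    simp only [mul_apply, star_apply, Complex.star_def, ← Complex.normSq_eq_conj_mul_self,
      one_apply_eq] at this
    exact_mod_cast this

lemma re_trace_conj_diagonal_mul_conj_diagonal (W V : Matrix ι ι ℂ) (a b : ι → ℝ) :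
    (trace ((W * diagonal (fun i => (a i : ℂ)) * star W) *
      (V * diagonal (fun i => (b i : ℂ)) * star V))).re =
      ∑ i, ∑ j, a i * b j * Complex.normSq ((star W * V) i j) := by
  have hcycle : trace ((W * diagonal (fun i => (a i : ℂ)) * star W) *
      (V * diagonal (fun i => (b i : ℂ)) * star V)) =
      trace (diagonal (fun i => (a i : ℂ)) * (star W * V) * diagonal (fun i => (b i : ℂ)) *
        star (star W * V)) := by
    simp only [star_mul, star_star, Matrix.mul_assoc]
    rw [trace_mul_comm W]
    simp only [Matrix.mul_assoc]
  rw [hcycle]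
  generalize star W * V = M
  simp only [trace, diag_apply, Complex.re_sum]
  refine sum_congr rfl fun i _ => ?_
  simp only [mul_apply (M := _ * _ * diagonal _), mul_diagonal, diagonal_mul, star_apply,
    Complex.star_def, Complex.re_sum]
  refine sum_congr rfl fun j _ => ?_
  rw [mul_right_comm _ _ ((starRingEnd ℂ) _), mul_assoc _ _ ((starRingEnd ℂ) _), Complex.mul_conj]
  norm_cast
  ring

lemma IsHermitian.eigenvalues_unitary_conj {𝕜 : Type*} [RCLike 𝕜] {A : Matrix ι ι 𝕜}
    (hA : A.IsHermitian) (U : unitaryGroup ι 𝕜)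
    (hUA : ((U : Matrix ι ι 𝕜) * A * star (U : Matrix ι ι 𝕜)).IsHermitian) :
    hUA.eigenvalues = hA.eigenvalues := by
  rw [eigenvalues_eq_eigenvalues_iff, charpoly_mul_comm, ← Matrix.mul_assoc,
    Unitary.coe_star_mul_self, Matrix.one_mul]

end Matrix

section MatFun

variable {n : ℕ} {A B : Matrix (Fin n) (Fin n) ℂ}

lemma matFun_id (hA : A.IsHermitian) : matFun id A = A := by
  rw [matFun, dif_pos hA]
  exact hA.spectral_theorem.symm

lemma re_trace_mul_matFun (hA : A.IsHermitian) (hB : B.IsHermitian) (f : ℝ → ℝ) :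
    (trace (A * matFun f B)).re = ∑ i, ∑ j, hA.eigenvalues i * f (hB.eigenvalues j) *
      Complex.normSq ((star (hA.eigenvectorUnitary : Matrix (Fin n) (Fin n) ℂ) *
        hB.eigenvectorUnitary) i j) := by
  conv_lhs => rw [← matFun_id hA, matFun, dif_pos hA, matFun, dif_pos hB]
  exact re_trace_conj_diagonal_mul_conj_diagonal _ _ _ _

lemma re_trace_mul_matFun_self (hA : A.IsHermitian) (f : ℝ → ℝ) :
    (trace (A * matFun f A)).re = ∑ i, hA.eigenvalues i * f (hA.eigenvalues i) := by
  rw [re_trace_mul_matFun hA hA, Unitary.coe_star_mul_self]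
  refine sum_congr rfl fun i _ => ?_
  rw [sum_eq_single i (fun j _ hji => by simp [one_apply_ne' hji]) (by simp)]
  simp

end MatFun

lemma Ddown_eq_sub {n : ℕ} {p q : Fin n → ℝ} (hq : ∀ i, 0 < q i) :
    Ddown p q = ∑ i, p i * Real.log (p i) - ∑ i, sortDesc p i * sortDesc (Real.log ∘ q) i := by
  have hlog : sortDesc (Real.log ∘ q) = Real.log ∘ sortDesc q :=
    sortDesc_comp_of_monotoneOn <| Real.strictMonoOn_log.monotoneOn.mono <| by
      rintro _ ⟨i, rfl⟩; exact hq i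
  rw [← sum_comp_sortDesc (fun x => x * Real.log x), Ddown, hlog, ← sum_sub_distrib]
  refine sum_congr rfl fun i _ => ?_
  rcases eq_or_ne (sortDesc p i) 0 with hp | hp
  · simp [hp]
  · have hq' : sortDesc q i ≠ 0 := by rw [sortDesc_eq_comp]; exact (hq _).ne'
    rw [Function.comp_apply, Real.log_div hp hq', mul_sub]

/-- for density matrices `ρ, σ` (with `σ` positive definite) and any unitary `U`,
`D(UρU†‖σ) ≥ D^↓(ρ‖σ)`. -/
theorem relEnt_unitary_ge_Ddown {n : ℕ} (ρ σ : Matrix (Fin n) (Fin n) ℂ)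
    (hρ : IsDensity ρ) (hσ : IsDensity σ) (hσpd : σ.PosDef)
    (U : Matrix.unitaryGroup (Fin n) ℂ) :
    relEnt ((U : Matrix (Fin n) (Fin n) ℂ) * ρ * star (U : Matrix (Fin n) (Fin n) ℂ)) σ ≥
      Ddown hρ.1.1.eigenvalues hσ.1.1.eigenvalues := by
  set p := hρ.1.1.eigenvalues
  set q := hσ.1.1.eigenvalues
  have hρ' : ((U : Matrix (Fin n) (Fin n) ℂ) * ρ *
      star (U : Matrix (Fin n) (Fin n) ℂ)).IsHermitian :=
    isHermitian_mul_mul_conjTranspose _ hρ.1.1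
  have hp : hρ'.eigenvalues = p := hρ.1.1.eigenvalues_unitary_conj U hρ'
  set V := star hρ'.eigenvectorUnitary * hσ.1.1.eigenvectorUnitary
  calc relEnt _ σ
      = ∑ i, p i * Real.log (p i) - ∑ i, ∑ j, p i * Real.log (q j) * Complex.normSq (V i j) := by
        rw [relEnt, mul_sub, trace_sub, Complex.sub_re, matLog, matLog,
          re_trace_mul_matFun_self hρ', re_trace_mul_matFun hρ' hσ.1.1, hp]
        rfl
    _ ≥ ∑ i, p i * Real.log (p i) - ∑ i, sortDesc p i * sortDesc (Real.log ∘ q) i :=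
        sub_le_sub_left (sum_mul_mul_le_of_mem_doublyStochastic (b := Real.log ∘ q)
          (sum_mul_comp_perm_le_sum_sortDesc_mul _ _) (normSq_unitary_mem_doublyStochastic V)) _
    _ = Ddown p q := (Ddown_eq_sub hσpd.eigenvalues_pos).symm
end
end

section
/- Let H ≥ 0 be a Hermitian operator on a finite-dimensional Hilbert space with at least two distinct eigenvalues and with nondegenerate ground eigenvalue E₀ = 0 (i.e., g(E₀) = 1). Fix inverse temperatures β_c > β_h > 0. Then the ratio of von Neumann entropies S(ω_{β_c}(JH))/S(ω_{β_h}(JH)) tends to 0 as J → +∞. -/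
open Matrix
open scoped ComplexOrder

noncomputable section

open Filter Topology

/-! Both Gibbs states are functions of `H`, so their von Neumann entropies are the Shannon
entropies `S(t) = t ⟨E⟩ + log Z(t)` of the Boltzmann distributions `p_i ∝ exp (-t E_i)` on the
spectrum `E` of `H`, at `t = β J`. If `0` is a simple eigenvalue and `Δ > 0` is the next one, every
excited level has weight at most `exp (-t Δ)` and the first one at least `exp (-t Δ) / n`, whence
`t Δ exp (-t Δ) / n ≤ S(t) ≤ n exp (-t Δ) (t ∑ E + 1)` for `t ≥ 0`. The ratio at `t = β_c J` and
`t = β_h J` therefore decays like `exp (-(β_c - β_h) Δ J)`. -/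

open Real Finset

theorem tendsto_div_zero_of_exp_bounds {f g : ℝ → ℝ} {N M Δ βc βh : ℝ} (hN : 0 < N)
    (hM : 0 ≤ M) (hΔ : 0 < Δ) (hβh : 0 < βh) (hβ : βh < βc) (hf₀ : ∀ J, 0 ≤ f J)
    (hf : ∀ J > 0, f J ≤ N * exp (-(βc * J * Δ)) * (βc * J * M + 1))
    (hg : ∀ J > 0, exp (-(βh * J * Δ)) * (βh * J * Δ) / N ≤ g J) :
    Tendsto (fun J => f J / g J) atTop (𝓝 0) := by
  have hβc : 0 < βc := hβh.trans hβ
  let bound J := N ^ 2 * (βc * M + J⁻¹) / (βh * Δ) * exp (-((βc - βh) * Δ * J))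
  have hbound : Tendsto bound atTop (𝓝 0) := by
    have hexp : Tendsto (fun J => exp (-((βc - βh) * Δ * J))) atTop (𝓝 0) := by
      refine tendsto_exp_atBot.comp <| tendsto_neg_atTop_atBot.comp ?_
      exact tendsto_id.const_mul_atTop (mul_pos (sub_pos.mpr hβ) hΔ)
    have hcoeff : Tendsto (fun J => N ^ 2 * (βc * M + J⁻¹) / (βh * Δ)) atTop
        (𝓝 (N ^ 2 * (βc * M + 0) / (βh * Δ))) :=
      ((tendsto_const_nhds.add tendsto_inv_atTop_zero).const_mul _).div_const _
    simpa using hcoeff.mul hexp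
  have hle : ∀ᶠ J in atTop, f J / g J ≤ bound J := by
    filter_upwards [eventually_gt_atTop 0] with J hJ
    calc f J / g J
        ≤ N * exp (-(βc * J * Δ)) * (βc * J * M + 1) / (exp (-(βh * J * Δ)) * (βh * J * Δ) / N) :=
          div_le_div₀ (by positivity) (hf J hJ) (by positivity) (hg J hJ)
      _ = bound J := by
          simp only [bound]
          rw [show -(βc * J * Δ) = -((βc - βh) * Δ * J) + -(βh * J * Δ) by ring, exp_add]
          field_simp
  have hnonneg : ∀ᶠ J in atTop, 0 ≤ f J / g J := by
    filter_upwards [eventually_gt_atTop 0] with J hJ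
    exact div_nonneg (hf₀ J) ((by positivity : (0 : ℝ) ≤ _).trans (hg J hJ))
  exact tendsto_of_tendsto_of_tendsto_of_le_of_le' tendsto_const_nhds hbound hnonneg hle

section Gibbs

variable {ι : Type*} [Fintype ι] (E : ι → ℝ) (t : ℝ)

def partitionFunction : ℝ := ∑ i, exp (-(t * E i))

def gibbsProb (i : ι) : ℝ := exp (-(t * E i)) / partitionFunction E t

def gibbsEntropy : ℝ := ∑ i, negMulLog (gibbsProb E t i)

variable {E t}

theorem partitionFunction_pos [Nonempty ι] : 0 < partitionFunction E t :=
  sum_pos (fun _ _ => exp_pos _) univ_nonempty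

theorem sum_gibbsProb [Nonempty ι] : ∑ i, gibbsProb E t i = 1 := by
  simp_rw [gibbsProb, ← sum_div]
  exact div_self partitionFunction_pos.ne'

theorem gibbsEntropy_eq [Nonempty ι] :
    gibbsEntropy E t = t * ∑ i, gibbsProb E t i * E i + log (partitionFunction E t) := by
  have hlog (i : ι) : log (gibbsProb E t i) = -(t * E i) - log (partitionFunction E t) := by
    rw [gibbsProb, log_div (exp_ne_zero _) partitionFunction_pos.ne', log_exp]
  calc gibbsEntropy E t
      = ∑ i, (t * (gibbsProb E t i * E i) + gibbsProb E t i * log (partitionFunction E t)) := by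
        refine sum_congr rfl fun i _ => ?_
        rw [negMulLog, hlog]
        ring
    _ = _ := by rw [sum_add_distrib, ← mul_sum, ← sum_mul, sum_gibbsProb, one_mul]

theorem gibbsEntropy_nonneg : 0 ≤ gibbsEntropy E t := by
  have hZ : 0 ≤ partitionFunction E t := sum_nonneg fun _ _ => (exp_pos _).le
  refine sum_nonneg fun i _ => negMulLog_nonneg (div_nonneg (exp_pos _).le hZ) ?_
  exact div_le_one_of_le₀ (single_le_sum (fun j _ => (exp_pos (-(t * E j))).le) (mem_univ i)) hZ

variable {i0 : ι}

theorem one_le_partitionFunction (h0 : E i0 = 0) : 1 ≤ partitionFunction E t := by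
  simpa [partitionFunction, h0] using
    single_le_sum (f := fun i => exp (-(t * E i))) (fun i _ => (exp_pos _).le) (mem_univ i0)

theorem partitionFunction_le_card (hE : 0 ≤ E) (ht : 0 ≤ t) :
    partitionFunction E t ≤ Fintype.card ι := by
  simpa [partitionFunction] using sum_le_card_nsmul univ (fun i => exp (-(t * E i))) 1
    fun i _ => exp_le_one_iff.mpr (neg_nonpos.mpr (mul_nonneg ht (hE i)))

theorem gibbsProb_le_exp (h0 : E i0 = 0) (i : ι) : gibbsProb E t i ≤ exp (-(t * E i)) :=
  div_le_self (exp_pos _).le (one_le_partitionFunction h0)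

theorem exp_div_card_le_gibbsProb (hE : 0 ≤ E) (ht : 0 ≤ t) (i : ι) :
    exp (-(t * E i)) / Fintype.card ι ≤ gibbsProb E t i :=
  have : Nonempty ι := ⟨i⟩
  div_le_div_of_nonneg_left (exp_pos _).le partitionFunction_pos (partitionFunction_le_card hE ht)

theorem mul_exp_div_card_le_gibbsEntropy (hE : 0 ≤ E) (h0 : E i0 = 0) (ht : 0 ≤ t) (i : ι) :
    exp (-(t * E i)) * (t * E i) / Fintype.card ι ≤ gibbsEntropy E t := by
  have : Nonempty ι := ⟨i⟩
  have hterms : ∀ j ∈ univ, 0 ≤ gibbsProb E t j * E j := fun j _ =>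
    mul_nonneg (div_nonneg (exp_pos _).le partitionFunction_pos.le) (hE j)
  calc exp (-(t * E i)) * (t * E i) / Fintype.card ι
      = t * (exp (-(t * E i)) / Fintype.card ι * E i) := by ring
    _ ≤ t * (gibbsProb E t i * E i) := by
        gcongr
        · exact hE i
        · exact exp_div_card_le_gibbsProb hE ht i
    _ ≤ t * ∑ j, gibbsProb E t j * E j := by gcongr; exact single_le_sum hterms (mem_univ i)
    _ ≤ gibbsEntropy E t := by
        rw [gibbsEntropy_eq]
        exact le_add_of_nonneg_right (log_nonneg (one_le_partitionFunction h0))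

variable {Δ : ℝ}

theorem partitionFunction_sub_one_le (h0 : E i0 = 0) (hgap : ∀ i ≠ i0, Δ ≤ E i) (ht : 0 ≤ t) :
    partitionFunction E t - 1 ≤ Fintype.card ι * exp (-(t * Δ)) := by
  classical
  have hexp : ∀ i ∈ univ.erase i0, exp (-(t * E i)) ≤ exp (-(t * Δ)) := fun i hi => by
    gcongr
    exact hgap i (ne_of_mem_erase hi)
  have hcard : ((univ.erase i0).card : ℝ) ≤ Fintype.card ι := by
    exact_mod_cast (card_erase_le).trans (card_univ).le
  calc partitionFunction E t - 1 = ∑ i ∈ univ.erase i0, exp (-(t * E i)) := by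
        rw [partitionFunction, ← add_sum_erase _ _ (mem_univ i0), h0]
        simp
    _ ≤ (univ.erase i0).card * exp (-(t * Δ)) := by
        simpa using sum_le_card_nsmul _ _ _ hexp
    _ ≤ Fintype.card ι * exp (-(t * Δ)) := by gcongr

theorem gibbsEntropy_le (hE : 0 ≤ E) (h0 : E i0 = 0) (hgap : ∀ i ≠ i0, Δ ≤ E i) (ht : 0 ≤ t) :
    gibbsEntropy E t ≤ Fintype.card ι * exp (-(t * Δ)) * (t * ∑ i, E i + 1) := by
  have : Nonempty ι := ⟨i0⟩
  have hterm (i : ι) : gibbsProb E t i * E i ≤ exp (-(t * Δ)) * E i := by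
    rcases eq_or_ne i i0 with rfl | hi
    · simp [h0]
    · gcongr
      · exact hE i
      · exact (gibbsProb_le_exp h0 i).trans (by gcongr; exact hgap i hi)
  have hmean : ∑ i, gibbsProb E t i * E i ≤ exp (-(t * Δ)) * ∑ i, E i := by
    rw [mul_sum]
    exact sum_le_sum fun i _ => hterm i
  have hlogZ : log (partitionFunction E t) ≤ Fintype.card ι * exp (-(t * Δ)) :=
    (log_le_sub_one_of_pos partitionFunction_pos).trans (partitionFunction_sub_one_le h0 hgap ht)
  have hcard : 1 ≤ (Fintype.card ι : ℝ) := by exact_mod_cast Fintype.card_pos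
  have hM : 0 ≤ t * (exp (-(t * Δ)) * ∑ i, E i) := by
    have := sum_nonneg fun i (_ : i ∈ univ) => hE i
    positivity
  rw [gibbsEntropy_eq]
  calc t * ∑ i, gibbsProb E t i * E i + log (partitionFunction E t)
      ≤ t * (exp (-(t * Δ)) * ∑ i, E i) + Fintype.card ι * exp (-(t * Δ)) := by gcongr
    _ ≤ Fintype.card ι * exp (-(t * Δ)) * (t * ∑ i, E i + 1) := by nlinarith

theorem tendsto_gibbsEntropy_div {i1 : ι} (hE : 0 ≤ E) (h0 : E i0 = 0)
    (hgap : ∀ i ≠ i0, E i1 ≤ E i) (hpos : 0 < E i1) {βc βh : ℝ} (hβh : 0 < βh) (hβ : βh < βc) :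
    Tendsto (fun J => gibbsEntropy E (βc * J) / gibbsEntropy E (βh * J)) atTop (𝓝 0) :=
  tendsto_div_zero_of_exp_bounds (Nat.cast_pos.mpr (Fintype.card_pos_iff.mpr ⟨i0⟩))
    (sum_nonneg fun i _ => hE i) hpos hβh hβ (fun _ => gibbsEntropy_nonneg)
    (fun J hJ => gibbsEntropy_le hE h0 hgap (mul_pos (hβh.trans hβ) hJ).le)
    (fun J hJ => mul_exp_div_card_le_gibbsEntropy hE h0 (by positivity) i1)

end Gibbs

theorem exists_gap_of_unique_zero {ι : Type*} [Fintype ι] {E : ι → ℝ} {i0 : ι} (hE : 0 ≤ E)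
    (huniq : ∀ i, E i = 0 → i = i0) (hne : ∃ i j, E i ≠ E j) :
    ∃ i1, 0 < E i1 ∧ ∀ i ≠ i0, E i1 ≤ E i := by
  obtain ⟨k, hk⟩ : ∃ k, E k ≠ 0 := by
    obtain ⟨i, j, hij⟩ := hne
    by_contra! h
    exact hij ((h i).trans (h j).symm)
  obtain ⟨i1, hi1, hmin⟩ := (univ.filter fun i => E i ≠ 0).exists_min_image E ⟨k, by simpa using hk⟩
  exact ⟨i1, (hE i1).lt_of_ne' (mem_filter.mp hi1).2,
    fun i hi => hmin i (by simpa using fun h => hi (huniq i h))⟩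

namespace Matrix.IsHermitian

variable {m 𝕜 : Type*} [Fintype m] [DecidableEq m] [RCLike 𝕜] {A : Matrix m m 𝕜}

theorem trace_cfc (hA : A.IsHermitian) (f : ℝ → ℝ) :
    (cfc f A).trace = ∑ i, (f (hA.eigenvalues i) : 𝕜) := by
  rw [hA.cfc_eq, IsHermitian.cfc, Unitary.conjStarAlgAut_apply, trace_mul_cycle]
  simp

end Matrix.IsHermitian

section Spectral

variable {n : ℕ}

theorem matFun_eq_cfc {A : Matrix (Fin n) (Fin n) ℂ} (hA : A.IsHermitian) (f : ℝ → ℝ) :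
    matFun f A = cfc f A := by
  rw [matFun, dif_pos hA, hA.cfc_eq, IsHermitian.cfc, Unitary.conjStarAlgAut_apply]
  rfl

theorem vnEntropy_cfc {A : Matrix (Fin n) (Fin n) ℂ} (hA : A.IsHermitian) (f : ℝ → ℝ) :
    vnEntropy (cfc f A) = ∑ i, negMulLog (f (hA.eigenvalues i)) := by
  have hcont (g : ℝ → ℝ) : ContinuousOn g (spectrum ℝ A) := A.finite_real_spectrum.continuousOn g
  have hlog : matLog (cfc f A) = cfc (log ∘ f) A :=
    (matFun_eq_cfc (cfc_predicate f A) log).trans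
      (cfc_comp log f A hA ((A.finite_real_spectrum.image f).continuousOn _) (hcont f)).symm
  rw [vnEntropy, hlog, ← cfc_mul _ _ _ (hcont _) (hcont _), hA.trace_cfc]
  simp [negMulLog]

theorem gibbs_ofReal_smul (β J : ℝ) (H : Matrix (Fin n) (Fin n) ℂ) :
    gibbs β ((J : ℂ) • H) = gibbs (β * J) H := by
  rw [gibbs, gibbs, smul_smul]
  push_cast
  ring_nf

-- `CFC.real_exp_eq_normedSpace_exp` needs some normed algebra structure; `NormedSpace.exp` does
-- not depend on which one.
open scoped Matrix.Norms.L2Operator in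
theorem exp_ofReal_smul_eq_cfc {H : Matrix (Fin n) (Fin n) ℂ} (hH : H.IsHermitian) (t : ℝ) :
    NormedSpace.exp ((t : ℂ) • H) = cfc (fun x => exp (t * x)) H := by
  rw [Complex.coe_smul, ← cfc_const_mul_id t H hH.isSelfAdjoint,
    ← CFC.real_exp_eq_normedSpace_exp (cfc_predicate _ H), ← cfc_comp exp _ H hH.isSelfAdjoint]
  rfl

theorem gibbs_eq_cfc {H : Matrix (Fin n) (Fin n) ℂ} (hH : H.IsHermitian) (t : ℝ) :
    gibbs t H = cfc (fun x => exp (-(t * x)) / partitionFunction hH.eigenvalues t) H := by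
  rw [gibbs, ← Complex.ofReal_neg, exp_ofReal_smul_eq_cfc hH, hH.trace_cfc, ← RCLike.ofReal_sum,
    ← RCLike.ofReal_inv, ← RCLike.real_smul_eq_coe_smul, ← cfc_const_mul _ (fun x => exp (-t * x))]
  simp only [partitionFunction, neg_mul, div_eq_inv_mul]

theorem vnEntropy_gibbs {H : Matrix (Fin n) (Fin n) ℂ} (hH : H.IsHermitian) (t : ℝ) :
    vnEntropy (gibbs t H) = gibbsEntropy hH.eigenvalues t := by
  rw [gibbs_eq_cfc hH, vnEntropy_cfc hH]
  rfl

end Spectral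

theorem entropy_ratio_tendsto_zero_general {n : ℕ} (H : Matrix (Fin n) (Fin n) ℂ)
    (hH : H.PosSemidef)
    (htwo : ∃ i j : Fin n, hH.1.eigenvalues i ≠ hH.1.eigenvalues j)
    (hnondeg : Fintype.card {i : Fin n // hH.1.eigenvalues i = 0} = 1)
    (βc βh : ℝ) (hβh : 0 < βh) (hβ : βh < βc) :
    Tendsto (fun J : ℝ =>
        vnEntropy (gibbs βc ((J : ℂ) • H)) / vnEntropy (gibbs βh ((J : ℂ) • H)))
      atTop (𝓝 0) := by
  obtain ⟨⟨i0, h0⟩, huniq⟩ := Fintype.card_eq_one_iff.mp hnondeg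
  obtain ⟨i1, hpos, hgap⟩ := exists_gap_of_unique_zero hH.eigenvalues_nonneg
    (fun i hi => congrArg Subtype.val (huniq ⟨i, hi⟩)) htwo
  refine (tendsto_gibbsEntropy_div hH.eigenvalues_nonneg h0 hgap hpos hβh hβ).congr fun J => ?_
  rw [gibbs_ofReal_smul, gibbs_ofReal_smul, vnEntropy_gibbs hH.1, vnEntropy_gibbs hH.1]

/-- for `H ≥ 0` with at least two distinct eigenvalues and a nondegenerate
ground eigenvalue `E₀ = 0`, and inverse temperatures `β_c > β_h > 0`,
`S(ω_{β_c}(JH))/S(ω_{β_h}(JH)) → 0` as `J → +∞`. -/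
theorem entropy_ratio_tendsto_zero {n : ℕ} (H : Matrix (Fin n) (Fin n) ℂ)
    (hH : H.PosSemidef)
    (htwo : ∃ i j : Fin n, hH.1.eigenvalues i ≠ hH.1.eigenvalues j)
    (hzero : ∃ i, hH.1.eigenvalues i = 0)
    (hnondeg : Fintype.card {i : Fin n // hH.1.eigenvalues i = 0} = 1)
    (βc βh : ℝ) (hβh : 0 < βh) (hβ : βh < βc) :
    Tendsto (fun J : ℝ =>
        vnEntropy (gibbs βc ((J : ℂ) • H)) / vnEntropy (gibbs βh ((J : ℂ) • H)))
      atTop (𝓝 0) :=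
  entropy_ratio_tendsto_zero_general H hH htwo hnondeg βc βh hβh hβ
end
end

section
/- Consider the classical 1D Ising Hamiltonian on N spins with periodic boundary conditions, H_N(σ) = −h Σ_j σ_j − J Σ_j σ_j σ_{j+1}, with σ_j ∈ {−1, +1}, in the antiferromagnetic regime J < 0 with h = 2|J|. Then the number of ground state configurations (configurations minimizing H_N) is at least 2^{⌊N/2⌋}. -/
noncomputable section

/-- The spin value (±1) of a Boolean spin. -/
def spin (b : Bool) : ℝ := if b then 1 else -1

/-- Classical 1D Ising energy with periodic boundary conditions:
`H_N(σ) = −h Σ_j σ_j − J Σ_j σ_j σ_{j+1}` (indices mod `N`). -/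
def isingE (N : ℕ) [NeZero N] (J h : ℝ) (σ : Fin N → Bool) : ℝ :=
  -h * ∑ j : Fin N, spin (σ j) - J * ∑ j : Fin N, spin (σ j) * spin (σ (j + 1))

/-! Since `(1 - σ_j)(1 - σ_{j+1}) = 1 - σ_j - σ_{j+1} + σ_j σ_{j+1}` and the shift `j ↦ j + 1` is a
bijection, at `h = -2J` the energy is `N J - J Σ_j (1 - σ_j)(1 - σ_{j+1})`. Each summand is
nonnegative and vanishes unless both sites are down, so for `J < 0` every configuration without
two adjacent down spins is a ground state. Leaving the even sites up and choosing the odd sites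
`1, 3, …, 2⌊N/2⌋ - 1` freely gives `2^⌊N/2⌋` such configurations. -/

section Energy

variable {N : ℕ} [NeZero N]

lemma isingE_neg_two_mul (J : ℝ) (σ : Fin N → Bool) :
    isingE N J (-2 * J) σ = N * J - J * ∑ j, (1 - spin (σ j)) * (1 - spin (σ (j + 1))) := by
  have hshift : ∑ j : Fin N, spin (σ (j + 1)) = ∑ j, spin (σ j) :=
    Fintype.sum_equiv (Equiv.addRight 1) _ _ fun _ => rfl
  have hexpand : ∑ j : Fin N, (1 - spin (σ j)) * (1 - spin (σ (j + 1)))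
      = N - ∑ j, spin (σ j) - ∑ j, spin (σ (j + 1)) + ∑ j, spin (σ j) * spin (σ (j + 1)) := by
    simp only [sub_mul, one_mul, mul_sub, mul_one, Finset.sum_sub_distrib,
      Finset.sum_const, Finset.card_univ, Fintype.card_fin, nsmul_eq_mul]
    ring
  rw [isingE, hexpand, hshift]
  ring

lemma one_sub_spin_nonneg (b : Bool) : 0 ≤ 1 - spin b := by
  cases b <;> norm_num [spin]

def NoAdjacentDown (σ : Fin N → Bool) : Prop :=
  ∀ j, σ j = true ∨ σ (j + 1) = true

lemma mul_le_isingE (J : ℝ) (hJ : J ≤ 0) (σ : Fin N → Bool) :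
    N * J ≤ isingE N J (-2 * J) σ := by
  have hsum : 0 ≤ ∑ j, (1 - spin (σ j)) * (1 - spin (σ (j + 1))) :=
    Finset.sum_nonneg fun j _ => mul_nonneg (one_sub_spin_nonneg _) (one_sub_spin_nonneg _)
  rw [isingE_neg_two_mul]
  nlinarith

lemma isingE_of_noAdjacentDown (J : ℝ) {σ : Fin N → Bool} (hσ : NoAdjacentDown σ) :
    isingE N J (-2 * J) σ = N * J := by
  have hsum : ∑ j, (1 - spin (σ j)) * (1 - spin (σ (j + 1))) = 0 :=
    Finset.sum_eq_zero fun j _ => by rcases hσ j with h | h <;> simp [h, spin]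
  rw [isingE_neg_two_mul, hsum, mul_zero, sub_zero]

lemma isingE_le_of_noAdjacentDown (J : ℝ) (hJ : J ≤ 0) {σ : Fin N → Bool}
    (hσ : NoAdjacentDown σ) (τ : Fin N → Bool) :
    isingE N J (-2 * J) σ ≤ isingE N J (-2 * J) τ :=
  (isingE_of_noAdjacentDown J hσ).trans_le (mul_le_isingE J hJ τ)

end Energy

section OddSites

variable (N : ℕ)

/-- Site `2i + 1` carries the spin `f i`; all other sites are up. -/
def oddSiteConfig (f : Fin (N / 2) → Bool) (j : Fin N) : Bool :=
  if h : j.val % 2 = 1 ∧ j.val / 2 < N / 2 then f ⟨j.val / 2, h.2⟩ else true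

variable {N}

lemma oddSiteConfig_two_mul_add_one (f : Fin (N / 2) → Bool) (i : Fin (N / 2)) :
    oddSiteConfig N f ⟨2 * i + 1, by omega⟩ = f i := by
  have hi := i.isLt
  rw [oddSiteConfig, dif_pos (by simp only; omega)]
  congr
  simp only
  omega

lemma oddSiteConfig_injective : Function.Injective (oddSiteConfig N) := fun f g hfg =>
  funext fun i => by
    rw [← oddSiteConfig_two_mul_add_one f i, ← oddSiteConfig_two_mul_add_one g i, hfg]

lemma oddSiteConfig_of_even (f : Fin (N / 2) → Bool) {j : Fin N} (hj : j.val % 2 = 0) :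
    oddSiteConfig N f j = true := by
  rw [oddSiteConfig, dif_neg (by omega)]

/-- The neighbour of an odd site is even, also across the boundary `N - 1 ↦ 0`. -/
lemma noAdjacentDown_oddSiteConfig [NeZero N] (f : Fin (N / 2) → Bool) :
    NoAdjacentDown (oddSiteConfig N f) := by
  intro j
  rcases Nat.mod_two_eq_zero_or_one j.val with hj | hj
  · exact Or.inl (oddSiteConfig_of_even f hj)
  · refine Or.inr (oddSiteConfig_of_even f ?_)
    have hj' := j.isLt
    rw [Fin.val_add, Fin.val_one', Nat.mod_eq_of_lt (by omega : 1 < N)]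
    rcases Nat.lt_or_ge (j.val + 1) N with hlt | hwrap
    · rw [Nat.mod_eq_of_lt hlt]; omega
    · rw [show j.val + 1 = N by omega, Nat.mod_self]

end OddSites

/-- in the antiferromagnetic regime `J < 0` with `h = 2|J|`, the 1D Ising chain
with periodic boundary conditions has at least `2^⌊N/2⌋` ground state configurations. -/
theorem ising_ground_state_count (N : ℕ) [NeZero N] (J h : ℝ) (hJ : J < 0) (hh : h = 2 * |J|) :
    2 ^ (N / 2) ≤
      {σ : Fin N → Bool | ∀ τ : Fin N → Bool, isingE N J h σ ≤ isingE N J h τ}.ncard := by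
  rw [abs_of_neg hJ, ← neg_mul_comm] at hh
  subst hh
  calc 2 ^ (N / 2) = (Set.range (oddSiteConfig N)).ncard := by
        rw [Set.ncard_range_of_injective oddSiteConfig_injective, Nat.card_fun]
        simp
    _ ≤ _ := Set.ncard_le_ncard <| by
        rintro _ ⟨f, rfl⟩
        exact isingE_le_of_noAdjacentDown J hJ.le (noAdjacentDown_oddSiteConfig f)
end
end
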